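/- For every m > 0 there is a constant C such that for all v > 0, unit vectors ν ∈ ℝ³, t ∈ ℝ, and all φ in the Sobolev space H²(ℝ³), the L² norm of (e^{-it√((p+vν)²+m²)} − e^{-it(v+ν·p)})φ, where the operators are Fourier multipliers in p, is at most C·(|t|/v)·‖φ‖_{H²(ℝ³)}. -/

import Mathlib

/-!
Both propagators act by multiplication on the Fourier side, so a pointwise bound on the
difference of the symbols suffices. Since `|e^{-ita} - e^{-itb}| ≤ |t| |a - b|`, this reduces to
showing that the relativistic dispersion `√(|ξ + vν|² + m²)` differs from its large-`v`
linearization `v + ν·ξ` by at most `(9 + m²)(1 + |ξ|²)/v`.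
-/

open MeasureTheory
open scoped RealInnerProductSpace ENNReal

noncomputable section

abbrev E3 := EuclideanSpace ℝ (Fin 3)

theorem Complex.norm_exp_neg_I_mul_sub_le (t a b : ℝ) :
    ‖Complex.exp (-(Complex.I * t * a)) - Complex.exp (-(Complex.I * t * b))‖ ≤
      |t| * |a - b| := by
  have hfactor : Complex.exp (-(Complex.I * t * a)) - Complex.exp (-(Complex.I * t * b)) =
      Complex.exp (↑(-(t * b)) * Complex.I) *
        (Complex.exp (Complex.I * ↑(t * (b - a))) - 1) := by
    rw [mul_sub, mul_one, ← Complex.exp_add]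
    push_cast
    ring_nf
  calc _ = ‖Complex.exp (Complex.I * ↑(t * (b - a))) - 1‖ := by
        rw [hfactor, norm_mul, Complex.norm_exp_ofReal_mul_I, one_mul]
    _ ≤ ‖t * (b - a)‖ := Real.norm_exp_I_mul_ofReal_sub_one_le
    _ = |t| * |a - b| := by rw [Real.norm_eq_abs, abs_mul, abs_sub_comm]

section Linearization

variable {E : Type*} [NormedAddCommGroup E] [InnerProductSpace ℝ E]

theorem norm_add_smul_sq_of_norm_eq_one {ν : E} (hν : ‖ν‖ = 1) (ξ : E) (v : ℝ) :
    ‖ξ + v • ν‖ ^ 2 = ‖ξ‖ ^ 2 + 2 * v * ⟪ν, ξ⟫ + v ^ 2 := by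
  rw [norm_add_sq_real, real_inner_smul_right, norm_smul, real_inner_comm, Real.norm_eq_abs,
    hν, mul_one, sq_abs]
  ring

/-- With `A` the square root and `B = v + ⟪ν, ξ⟫`, one has `A ≥ |B|` and
`A² - B² = ‖ξ‖² - ⟪ν, ξ⟫² + m²`. If `A + B ≥ v` this bounds `(A - B) v`; otherwise
`⟪ν, ξ⟫ < -v/2`, so `v < 2‖ξ‖` and `(A - B) v ≤ 2 A v ≤ A² + v²`. -/
theorem abs_sqrt_norm_add_smul_sq_add_sq_sub_le {ν : E} (hν : ‖ν‖ = 1) {v : ℝ} (hv : 0 < v)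
    (m : ℝ) (ξ : E) :
    |√(‖ξ + v • ν‖ ^ 2 + m ^ 2) - (v + ⟪ν, ξ⟫)| ≤ (9 + m ^ 2) * ((1 + ‖ξ‖ ^ 2) / v) := by
  set A := √(‖ξ + v • ν‖ ^ 2 + m ^ 2)
  set B := v + ⟪ν, ξ⟫
  have hA_sq : A ^ 2 = ‖ξ‖ ^ 2 + 2 * v * ⟪ν, ξ⟫ + v ^ 2 + m ^ 2 := by
    rw [Real.sq_sqrt (by positivity), norm_add_smul_sq_of_norm_eq_one hν]
  have hinner : |⟪ν, ξ⟫| ≤ ‖ξ‖ := by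
    simpa [hν] using abs_real_inner_le_norm ν ξ
  have hinner_sq : ⟪ν, ξ⟫ ^ 2 ≤ ‖ξ‖ ^ 2 := sq_le_sq.mpr (by simpa using hinner)
  have hB_le_A : |B| ≤ A := Real.abs_le_sqrt <| by
    rw [norm_add_smul_sq_of_norm_eq_one hν]
    nlinarith
  have hBA : B ≤ A := (le_abs_self B).trans hB_le_A
  rw [abs_of_nonneg (sub_nonneg.mpr hBA), ← mul_div_assoc, le_div_iff₀ hv]
  rcases le_or_gt v (A + B) with hsum | hsum
  · calc (A - B) * v ≤ (A - B) * (A + B) := mul_le_mul_of_nonneg_left hsum (by linarith)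
      _ = ‖ξ‖ ^ 2 - ⟪ν, ξ⟫ ^ 2 + m ^ 2 := by nlinarith
      _ ≤ (9 + m ^ 2) * (1 + ‖ξ‖ ^ 2) := by nlinarith [sq_nonneg m, sq_nonneg ‖ξ‖]
  · have hinner_neg : ⟪ν, ξ⟫ < 0 := by linarith
    have hv_le : v ≤ 2 * ‖ξ‖ := by linarith [neg_abs_le ⟪ν, ξ⟫]
    calc (A - B) * v ≤ A ^ 2 + v ^ 2 := by nlinarith [sq_nonneg (A - v), neg_abs_le B]
      _ ≤ (9 + m ^ 2) * (1 + ‖ξ‖ ^ 2) := by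
        nlinarith [sq_nonneg m, sq_nonneg ‖ξ‖, mul_le_mul hv_le hv_le hv.le (by linarith)]

end Linearization

/-- `φ` stands for the Fourier transform `φ̂`, the propagators act by multiplication by their
symbols, and `‖φ‖_{H²} = ‖(1 + |ξ|²) φ̂‖_{L²}` by Plancherel. -/
theorem stmt2_general (m : ℝ) :
    ∃ C : ℝ, ∀ v : ℝ, 0 < v → ∀ ν : E3, ‖ν‖ = 1 → ∀ t : ℝ, ∀ φ : E3 → ℂ,
      eLpNorm
        (fun ξ : E3 =>
          (Complex.exp (-(Complex.I * (t : ℂ) * (Real.sqrt (‖ξ + v • ν‖ ^ 2 + m ^ 2) : ℂ)))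
            - Complex.exp (-(Complex.I * (t : ℂ) * ((v + ⟪ν, ξ⟫ : ℝ) : ℂ)))) * φ ξ) 2 volume
        ≤ ENNReal.ofReal (C * (|t| / v)) *
          eLpNorm (fun ξ : E3 => ((1 + ‖ξ‖ ^ 2 : ℝ) : ℂ) * φ ξ) 2 volume := by
  refine ⟨9 + m ^ 2, fun v hv ν hν t φ => ?_⟩
  refine eLpNorm_le_mul_eLpNorm_of_ae_le_mul (Filter.Eventually.of_forall fun ξ => ?_) 2
  have hweight : ‖((1 + ‖ξ‖ ^ 2 : ℝ) : ℂ)‖ = 1 + ‖ξ‖ ^ 2 := by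
    rw [Complex.norm_real, Real.norm_of_nonneg (by positivity)]
  rw [norm_mul, norm_mul, hweight, ← mul_assoc]
  refine mul_le_mul_of_nonneg_right ?_ (norm_nonneg _)
  calc _ ≤ |t| * |√(‖ξ + v • ν‖ ^ 2 + m ^ 2) - (v + ⟪ν, ξ⟫)| :=
        Complex.norm_exp_neg_I_mul_sub_le _ _ _
    _ ≤ |t| * ((9 + m ^ 2) * ((1 + ‖ξ‖ ^ 2) / v)) :=
        mul_le_mul_of_nonneg_left (abs_sqrt_norm_add_smul_sq_add_sq_sub_le hν hv m ξ)
          (abs_nonneg t)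
    _ = (9 + m ^ 2) * (|t| / v) * (1 + ‖ξ‖ ^ 2) := by ring

/-- For every `m > 0` there is a constant `C` such that for all `v > 0`, unit vectors `ν`,
`t ∈ ℝ` and all `φ ∈ H²(ℝ³)`, the `L²` norm of
`(e^{-it√((p+vν)²+m²)} − e^{-it(v+ν·p)})φ` is at most `C·(|t|/v)·‖φ‖_{H²}`.

Since both operators are Fourier multipliers, by Plancherel this is equivalently stated on
the Fourier-transform side: `φ` below plays the role of the Fourier transform `φ̂`, the
operators act by multiplication by their symbols, and
`‖φ‖_{H²} = ‖⟨ξ⟩² φ̂‖_{L²}` with `⟨ξ⟩² = 1 + |ξ|²`. -/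
theorem stmt2 (m : ℝ) (hm : 0 < m) :
    ∃ C : ℝ, ∀ v : ℝ, 0 < v → ∀ ν : E3, ‖ν‖ = 1 → ∀ t : ℝ, ∀ φ : E3 → ℂ,
      eLpNorm
        (fun ξ : E3 =>
          (Complex.exp (-(Complex.I * (t : ℂ) * (Real.sqrt (‖ξ + v • ν‖ ^ 2 + m ^ 2) : ℂ)))
            - Complex.exp (-(Complex.I * (t : ℂ) * ((v + ⟪ν, ξ⟫ : ℝ) : ℂ)))) * φ ξ) 2 volume
        ≤ ENNReal.ofReal (C * (|t| / v)) *
          eLpNorm (fun ξ : E3 => ((1 + ‖ξ‖ ^ 2 : ℝ) : ℂ) * φ ξ) 2 volume :=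
  stmt2_general m
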